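/- arXiv:2112.02436 — 5 statements merged into one kernel-verified Lean document; each statement's English description precedes it below -/
import Mathlib

section
/- Let G = (A ∪ B, E) be a bipartite graph and f : E → [0,1] a fractional matching of total weight m ∈ ℕ, i.e., Σ_{u} f(v,u) ≤ 1 for every v ∈ A, Σ_{v} f(v,u) ≤ 1 for every u ∈ B, and Σ_{e ∈ E} f(e) = m. Then f lies in the convex hull of the characteristic vectors of matchings of size exactly m in G. -/
/-- A matching of size `m` in the bipartite graph with parts `A`, `B` and edge set `E`:
a subset of `E` of cardinality `m` whose edges are pairwise vertex-disjoint. -/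
def IsSizeMMatching {A B : Type*} [DecidableEq A] [DecidableEq B]
    (E : Finset (A × B)) (m : ℕ) (M : Finset (A × B)) : Prop :=
  M ⊆ E ∧ M.card = m ∧
    ∀ e ∈ M, ∀ e' ∈ M, e ≠ e' → e.1 ≠ e'.1 ∧ e.2 ≠ e'.2

open Finset

/-- Auxiliary: if every value is at most 1 and the total equals the cardinality,
then every value equals 1. -/
lemma aux_all_one {ι : Type*} [Fintype ι] (g : ι → ℝ) (h1 : ∀ i, g i ≤ 1)
    (h : ∑ i, g i = (Fintype.card ι : ℝ)) : ∀ i, g i = 1 := by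
  by_contra hc
  push_neg at hc
  obtain ⟨i, hi⟩ := hc
  have hlt : g i < 1 := lt_of_le_of_ne (h1 i) hi
  have hstrict : ∑ j, g j < ∑ _j : ι, (1 : ℝ) :=
    Finset.sum_lt_sum (fun j _ => h1 j) ⟨i, Finset.mem_univ i, hlt⟩
  rw [h] at hstrict
  simp at hstrict

/-- The doubly stochastic extension of a fractional bipartite matching. -/
noncomputable def Dmat {A B : Type*} [Fintype A] [Fintype B] (f : A × B → ℝ) (a b : ℕ) :
    (A ⊕ Fin b) → (B ⊕ Fin a) → ℝ
  | .inl v, .inl u => f (v, u)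
  | .inl v, .inr _ => (1 - ∑ u, f (v, u)) / a
  | .inr _, .inl u => (1 - ∑ v, f (v, u)) / b
  | .inr _, .inr _ => 0

/-- If `f : E → [0,1]` is a fractional matching of total weight `m ∈ ℕ` in a bipartite
graph, then `f` lies in the convex hull of the characteristic vectors of matchings of
size exactly `m`. -/
theorem stmt_5 {A B : Type*} [Fintype A] [Fintype B] [DecidableEq A] [DecidableEq B]
    (E : Finset (A × B)) (m : ℕ) (f : A × B → ℝ)
    (hf0 : ∀ e, 0 ≤ f e) (hf1 : ∀ e, f e ≤ 1) (hsupp : ∀ e ∉ E, f e = 0)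
    (hA : ∀ v : A, ∑ u : B, f (v, u) ≤ 1)
    (hB : ∀ u : B, ∑ v : A, f (v, u) ≤ 1)
    (hm : ∑ e ∈ E, f e = m) :
    f ∈ convexHull ℝ {g : A × B → ℝ | ∃ M : Finset (A × B),
      IsSizeMMatching E m M ∧ g = fun e => if e ∈ M then (1 : ℝ) else 0} := by
  classical
  -- total sum over all of A × B
  have hsum_univ : ∑ e : A × B, f e = (m : ℝ) := by
    rw [← hm]
    symm
    exact Finset.sum_subset (Finset.subset_univ E) (fun e _ he => hsupp e he)
  have hrowsum0 : ∀ v : A, (0 : ℝ) ≤ ∑ u, f (v, u) :=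
    fun v => Finset.sum_nonneg fun u _ => hf0 _
  have hcolsum0 : ∀ u : B, (0 : ℝ) ≤ ∑ v, f (v, u) :=
    fun u => Finset.sum_nonneg fun v _ => hf0 _
  have hsumA : ∑ v : A, (∑ u, f (v, u)) = (m : ℝ) := by
    rw [← hsum_univ, Fintype.sum_prod_type]
  have hsumB : ∑ u : B, (∑ v, f (v, u)) = (m : ℝ) := by
    rw [← hsum_univ, Fintype.sum_prod_type_right]
  have hmA : m ≤ Fintype.card A := by
    have h : (m : ℝ) ≤ (Fintype.card A : ℝ) := by
      rw [← hsumA]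
      calc ∑ v : A, (∑ u, f (v, u)) ≤ ∑ _v : A, (1 : ℝ) :=
            Finset.sum_le_sum (fun v _ => hA v)
        _ = (Fintype.card A : ℝ) := by simp
    exact_mod_cast h
  have hmB : m ≤ Fintype.card B := by
    have h : (m : ℝ) ≤ (Fintype.card B : ℝ) := by
      rw [← hsumB]
      calc ∑ u : B, (∑ v, f (v, u)) ≤ ∑ _u : B, (1 : ℝ) :=
            Finset.sum_le_sum (fun u _ => hB u)
        _ = (Fintype.card B : ℝ) := by simp
    exact_mod_cast h
  set a := Fintype.card A - m with ha
  set b := Fintype.card B - m with hb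
  set D := Dmat (A := A) (B := B) f a b with hD
  -- if a = 0 then all row sums are 1
  have hrow1 : a = 0 → ∀ v : A, ∑ u, f (v, u) = 1 := by
    intro h0 v
    have hcard : m = Fintype.card A := by omega
    exact aux_all_one (fun v => ∑ u, f (v, u)) hA (by rw [hsumA, hcard]) v
  have hcol1 : b = 0 → ∀ u : B, ∑ v, f (v, u) = 1 := by
    intro h0 u
    have hcard : m = Fintype.card B := by omega
    exact aux_all_one (fun u => ∑ v, f (v, u)) hB (by rw [hsumB, hcard]) u
  -- the matrix over a common index type
  have hcards : Fintype.card (A ⊕ Fin b) = Fintype.card (B ⊕ Fin a) := by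
    simp only [Fintype.card_sum, Fintype.card_fin]
    omega
  set φ : (A ⊕ Fin b) ≃ (B ⊕ Fin a) := Fintype.equivOfCardEq hcards with hφ
  set Mat : Matrix (A ⊕ Fin b) (A ⊕ Fin b) ℝ := fun i j => D i (φ j) with hMat
  -- D is "doubly stochastic"
  have hDnonneg : ∀ i j, 0 ≤ D i j := by
    rintro (v | d) (u | c)
    · exact hf0 _
    · exact div_nonneg (by linarith [hA v]) (Nat.cast_nonneg a)
    · exact div_nonneg (by linarith [hB u]) (Nat.cast_nonneg b)
    · exact le_refl _
  have hDrow : ∀ i, ∑ j, D i j = 1 := by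
    rintro (v | d)
    · rw [Fintype.sum_sum_type]
      rcases Nat.eq_zero_or_pos a with h0 | hpos
      · have hempty : ∑ c : Fin a, D (Sum.inl v) (Sum.inr c) = 0 :=
          Finset.sum_eq_zero (fun c _ => absurd c.2 (by omega))
        have h1 : ∑ u : B, D (Sum.inl v) (Sum.inl u) = ∑ u, f (v, u) := by simp [hD, Dmat]
        rw [h1, hempty, hrow1 h0 v, add_zero]
      · have hsum : ∑ c : Fin a, D (Sum.inl v) (Sum.inr c)
            = (a : ℝ) * ((1 - ∑ u, f (v, u)) / a) := by
          simp [hD, Dmat, Finset.sum_const, mul_comm]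
        have hane : (a : ℝ) ≠ 0 := Nat.cast_ne_zero.2 hpos.ne'
        have : ∑ u : B, D (Sum.inl v) (Sum.inl u) = ∑ u, f (v, u) := by simp [hD, Dmat]
        rw [this, hsum, mul_div_cancel₀ _ hane]
        ring
    · rw [Fintype.sum_sum_type]
      have h2 : ∑ c : Fin a, D (Sum.inr d) (Sum.inr c) = 0 := by simp [hD, Dmat]
      have h1 : ∑ u : B, D (Sum.inr d) (Sum.inl u)
          = ∑ u : B, (1 - ∑ v, f (v, u)) / b := by simp [hD, Dmat]
      rcases Nat.eq_zero_or_pos b with h0 | hpos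
      · exact absurd d.2 (by omega)
      · have hbne : (b : ℝ) ≠ 0 := Nat.cast_ne_zero.2 hpos.ne'
        rw [h1, h2, ← Finset.sum_div]
        have : ∑ u : B, (1 - ∑ v, f (v, u)) = (b : ℝ) := by
          rw [Finset.sum_sub_distrib, hsumB]
          simp only [Finset.sum_const, Finset.card_univ, nsmul_eq_mul, mul_one]
          have : (b : ℝ) = (Fintype.card B : ℝ) - m := by
            rw [hb]; push_cast [Nat.cast_sub hmB]; ring
          rw [this]
        rw [this, div_self hbne, add_zero]
  have hDcol : ∀ j, ∑ i, D i j = 1 := by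
    rintro (u | c)
    · rw [Fintype.sum_sum_type]
      have h1 : ∑ v : A, D (Sum.inl v) (Sum.inl u) = ∑ v, f (v, u) := by simp [hD, Dmat]
      rcases Nat.eq_zero_or_pos b with h0 | hpos
      · have hz : ∑ d : Fin b, D (Sum.inr d) (Sum.inl u) = 0 :=
          Finset.sum_eq_zero (fun d _ => absurd d.2 (by omega))
        rw [h1, hz, hcol1 h0 u, add_zero]
      · have hbne : (b : ℝ) ≠ 0 := Nat.cast_ne_zero.2 hpos.ne'
        have h2 : ∑ d : Fin b, D (Sum.inr d) (Sum.inl u)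
            = (b : ℝ) * ((1 - ∑ v, f (v, u)) / b) := by
          simp [hD, Dmat, Finset.sum_const, mul_comm]
        rw [h1, h2, mul_div_cancel₀ _ hbne]
        ring
    · rw [Fintype.sum_sum_type]
      have h2 : ∑ d : Fin b, D (Sum.inr d) (Sum.inr c) = 0 := by simp [hD, Dmat]
      rcases Nat.eq_zero_or_pos a with h0 | hpos
      · exact absurd c.2 (by omega)
      · have hane : (a : ℝ) ≠ 0 := Nat.cast_ne_zero.2 hpos.ne'
        have h1 : ∑ v : A, D (Sum.inl v) (Sum.inr c)
            = ∑ v : A, (1 - ∑ u, f (v, u)) / a := by simp [hD, Dmat]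
        rw [h1, h2, ← Finset.sum_div, add_zero]
        have : ∑ v : A, (1 - ∑ u, f (v, u)) = (a : ℝ) := by
          rw [Finset.sum_sub_distrib, hsumA]
          simp only [Finset.sum_const, Finset.card_univ, nsmul_eq_mul, mul_one]
          have : (a : ℝ) = (Fintype.card A : ℝ) - m := by
            rw [ha]; push_cast [Nat.cast_sub hmA]; ring
          rw [this]
        rw [this, div_self hane]
  have hMatDS : Mat ∈ doublyStochastic ℝ (A ⊕ Fin b) := by
    rw [mem_doublyStochastic_iff_sum]
    refine ⟨fun i j => hDnonneg i (φ j), fun i => ?_, fun j => ?_⟩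
    · rw [show ∑ j, Mat i j = ∑ j, D i (φ j) from rfl, Equiv.sum_comp φ (D i)]
      exact hDrow i
    · exact hDcol (φ j)
  obtain ⟨w, hw0, hw1, hwsum⟩ := exists_eq_sum_perm_of_mem_doublyStochastic hMatDS
  -- permutation matrix entries
  have hpermEntry : ∀ (σ : Equiv.Perm (A ⊕ Fin b)) (i j : A ⊕ Fin b),
      σ.permMatrix ℝ i j = if σ i = j then 1 else 0 := by
    intro σ i j
    simp [Equiv.Perm.permMatrix, PEquiv.toMatrix_apply, Equiv.toPEquiv_apply, Option.mem_def,
      eq_comm]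
  -- entries of Mat as a sum
  have hMatEntry : ∀ i j, Mat i j = ∑ σ : Equiv.Perm (A ⊕ Fin b), w σ * σ.permMatrix ℝ i j := by
    intro i j
    rw [← hwsum]
    rw [Matrix.sum_apply]
    simp [smul_eq_mul]
  -- the matching associated with a permutation
  set Msig : Equiv.Perm (A ⊕ Fin b) → Finset (A × B) :=
    fun σ => E.filter (fun e => φ (σ (Sum.inl e.1)) = Sum.inl e.2) with hMsig
  set g : Equiv.Perm (A ⊕ Fin b) → (A × B → ℝ) :=
    fun σ e => if e ∈ Msig σ then (1 : ℝ) else 0 with hg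
  set F : Finset (Equiv.Perm (A ⊕ Fin b)) := Finset.univ.filter (fun σ => 0 < w σ) with hF
  -- key positivity for σ ∈ F
  have hkey : ∀ σ ∈ F, ∀ i, 0 < D i (φ (σ i)) := by
    intro σ hσ i
    have hwσ : 0 < w σ := (Finset.mem_filter.1 hσ).2
    have hle : w σ ≤ Mat i (σ i) := by
      have hterm : w σ * σ.permMatrix ℝ i (σ i) = w σ := by
        rw [hpermEntry]; simp
      calc w σ = w σ * σ.permMatrix ℝ i (σ i) := hterm.symm
        _ ≤ ∑ τ : Equiv.Perm (A ⊕ Fin b), w τ * τ.permMatrix ℝ i (σ i) :=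
            Finset.single_le_sum
              (f := fun τ : Equiv.Perm (A ⊕ Fin b) => w τ * Equiv.Perm.permMatrix ℝ τ i (σ i))
              (fun τ _ => mul_nonneg (hw0 τ)
                (by rw [hpermEntry]; split <;> norm_num)) (Finset.mem_univ σ)
        _ = Mat i (σ i) := (hMatEntry _ _).symm
    calc (0:ℝ) < w σ := hwσ
      _ ≤ Mat i (σ i) := hle
      _ = D i (φ (σ i)) := rfl
  -- for σ ∈ F, Msig σ is a size-m matching
  have hmatching : ∀ σ ∈ F, IsSizeMMatching E m (Msig σ) := by
    intro σ hσ
    have hψ : Function.Injective (fun i => φ (σ i)) :=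
      φ.injective.comp σ.injective
    -- dummies map left
    have hdum : ∀ d : Fin b, (φ (σ (Sum.inr d))).isLeft := by
      intro d
      rcases h : φ (σ (Sum.inr d)) with u | c
      · simp
      · have := hkey σ hσ (Sum.inr d)
        rw [h] at this
        simp [hD, Dmat] at this
    -- edges in the matching come from positive entries
    have hedge : ∀ (v : A) (u : B), φ (σ (Sum.inl v)) = Sum.inl u → (v, u) ∈ E := by
      intro v u h
      have := hkey σ hσ (Sum.inl v)
      rw [h] at this
      by_contra hnot
      rw [show D (Sum.inl v) (Sum.inl u) = f (v, u) from rfl, hsupp _ hnot] at this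
      exact lt_irrefl _ this
    refine ⟨Finset.filter_subset _ _, ?_, ?_⟩
    · -- cardinality
      set S : Finset A := Finset.univ.filter (fun v => (φ (σ (Sum.inl v))).isLeft) with hS
      have hcardMS : (Msig σ).card = S.card := by
        apply Finset.card_bij (fun e _ => e.1)
        · intro e he
          simp only [hMsig, Finset.mem_filter] at he
          simp [hS, he.2]
        · intro e he e' he' hee
          simp only [hMsig, Finset.mem_filter] at he he'
          have : (Sum.inl e.2 : B ⊕ Fin a) = Sum.inl e'.2 := by
            rw [← he.2, ← he'.2, hee]
          have h2 : e.2 = e'.2 := by simpa using this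
          exact Prod.ext hee h2
        · intro v hv
          simp only [hS, Finset.mem_filter, Finset.mem_univ, true_and] at hv
          obtain ⟨u, hu⟩ := Sum.isLeft_iff.1 hv
          refine ⟨(v, u), ?_, rfl⟩
          simp only [hMsig, Finset.mem_filter]
          exact ⟨hedge v u hu, hu⟩
      -- now compute S.card
      have hTcard : (Finset.univ.filter (fun i : A ⊕ Fin b => (φ (σ i)).isRight)).card = a := by
        have himage : Finset.image (fun i => φ (σ i))
            (Finset.univ.filter (fun i : A ⊕ Fin b => (φ (σ i)).isRight))
            = Finset.univ.filter (fun j : B ⊕ Fin a => j.isRight) := by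
          apply Finset.ext
          intro j
          simp only [Finset.mem_image, Finset.mem_filter, Finset.mem_univ, true_and]
          constructor
          · rintro ⟨i, hi, rfl⟩; exact hi
          · intro hj
            refine ⟨σ.symm (φ.symm j), by simp [hj], by simp⟩
        have hinj : (Finset.image (fun i => φ (σ i))
            (Finset.univ.filter (fun i : A ⊕ Fin b => (φ (σ i)).isRight))).card
            = (Finset.univ.filter (fun i : A ⊕ Fin b => (φ (σ i)).isRight)).card :=
          Finset.card_image_of_injective _ hψ
        have hright : (Finset.univ.filter (fun j : B ⊕ Fin a => j.isRight)).card = a := by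
          have : Finset.univ.filter (fun j : B ⊕ Fin a => j.isRight)
              = Finset.univ.map ⟨Sum.inr, Sum.inr_injective⟩ := by
            apply Finset.ext
            rintro (u | c) <;> simp
          rw [this, Finset.card_map, Finset.card_univ, Fintype.card_fin]
        rw [← hinj, himage, hright]
      -- the filter over the sum type equals the image of the filter over A
      have hTimage : Finset.univ.filter (fun i : A ⊕ Fin b => (φ (σ i)).isRight)
          = Finset.image Sum.inl (Finset.univ.filter
              (fun v : A => (φ (σ (Sum.inl v))).isRight)) := by
        apply Finset.ext
        rintro (v | d)
        · simp
        · simp only [Finset.mem_filter, Finset.mem_univ, true_and, Finset.mem_image]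
          constructor
          · intro h
            have := hdum d
            rw [Sum.isRight_iff] at h
            obtain ⟨c, hc⟩ := h
            rw [hc] at this
            simp at this
          · rintro ⟨v, _, h⟩; exact absurd h (by simp)
      have hScompl : S.card + (Finset.univ.filter
          (fun v : A => (φ (σ (Sum.inl v))).isRight)).card = Fintype.card A := by
        have hnegfilter : Finset.univ.filter (fun v : A => ¬ (φ (σ (Sum.inl v))).isLeft)
            = Finset.univ.filter (fun v : A => (φ (σ (Sum.inl v))).isRight) := by
          apply Finset.filter_congr
          intro v _
          simp [Sum.not_isLeft]
        have h := Finset.card_filter_add_card_filter_not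
          (s := (Finset.univ : Finset A)) (p := fun v : A => (φ (σ (Sum.inl v))).isLeft)
        rw [hnegfilter, Finset.card_univ] at h
        rw [hS]
        exact h
      have hAright : (Finset.univ.filter
          (fun v : A => (φ (σ (Sum.inl v))).isRight)).card = a := by
        have h := hTcard
        rw [hTimage, Finset.card_image_of_injective _ Sum.inl_injective] at h
        exact h
      rw [hcardMS]
      omega
    · -- pairwise disjointness
      intro e he e' he' hne
      simp only [hMsig, Finset.mem_filter] at he he'
      constructor
      · intro h1
        apply hne
        have : (Sum.inl e.2 : B ⊕ Fin a) = Sum.inl e'.2 := by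
          rw [← he.2, ← he'.2, h1]
        exact Prod.ext h1 (by simpa using this)
      · intro h2
        apply hne
        have : φ (σ (Sum.inl e.1)) = φ (σ (Sum.inl e'.1)) := by
          rw [he.2, he'.2, h2]
        have h1 : (Sum.inl e.1 : A ⊕ Fin b) = Sum.inl e'.1 := hψ this
        exact Prod.ext (by simpa using h1) h2
  -- weights on F sum to 1
  have hFsum : ∑ σ ∈ F, w σ = 1 := by
    rw [← hw1]
    apply Finset.sum_subset (Finset.filter_subset _ _)
    intro σ _ hσ
    simp only [Finset.mem_filter, Finset.mem_univ, true_and, not_lt] at hσ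
    linarith [hw0 σ]
  -- f is the convex combination
  have hcomb : F.centerMass w g = f := by
    rw [Finset.centerMass_eq_of_sum_1 _ _ hFsum]
    have hext : ∑ σ ∈ F, w σ • g σ = ∑ σ : Equiv.Perm (A ⊕ Fin b), w σ • g σ := by
      apply Finset.sum_subset (Finset.filter_subset _ _)
      intro σ _ hσ
      simp only [Finset.mem_filter, Finset.mem_univ, true_and, not_lt] at hσ
      have : w σ = 0 := le_antisymm hσ (hw0 σ)
      rw [this, zero_smul]
    rw [hext]
    funext e
    rw [Finset.sum_apply]
    by_cases heE : e ∈ E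
    · have : f e = Mat (Sum.inl e.1) (φ.symm (Sum.inl e.2)) := by
        rw [hMat]
        simp only [Equiv.apply_symm_apply]
        rfl
      rw [this, hMatEntry]
      apply Finset.sum_congr rfl
      intro σ _
      rw [hpermEntry]
      have hcond : (σ (Sum.inl e.1) = φ.symm (Sum.inl e.2))
          ↔ (φ (σ (Sum.inl e.1)) = Sum.inl e.2) := by
        constructor
        · intro h; rw [h, Equiv.apply_symm_apply]
        · intro h; rw [← h, Equiv.symm_apply_apply]
      have : g σ e = if φ (σ (Sum.inl e.1)) = Sum.inl e.2 then (1:ℝ) else 0 := by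
        simp only [hg, hMsig, Finset.mem_filter, heE, true_and]
      simp only [Pi.smul_apply, this, smul_eq_mul]
      by_cases hc : φ (σ (Sum.inl e.1)) = Sum.inl e.2
      · rw [if_pos hc, if_pos (hcond.2 hc)]
      · rw [if_neg hc, if_neg (fun h => hc (hcond.1 h))]
    · have hfe : f e = 0 := hsupp e heE
      rw [hfe]
      apply Finset.sum_eq_zero
      intro σ _
      have : g σ e = 0 := by
        simp only [hg, hMsig, Finset.mem_filter]
        rw [if_neg (fun h => heE h.1)]
      simp [this]
  rw [← hcomb]
  apply Finset.centerMass_mem_convexHull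
  · intro σ hσ
    exact le_of_lt (Finset.mem_filter.1 hσ).2
  · rw [hFsum]; norm_num
  · intro σ hσ
    exact ⟨Msig σ, hmatching σ hσ, rfl⟩
end

section
/- Let G be a bipartite graph with parts A and B and let f : E → [0,1] satisfy Σ_{u ∈ B} f(v,u) ≤ 1 for all v ∈ A, Σ_{v ∈ A} f(v,u) ≤ 1 for all u ∈ B, and Σ_{e} f(e) = m ∈ ℕ. Then there exists a probability distribution μ on the set M_m of matchings of size m in G such that for each edge e, the μ-probability that a random matching contains e equals f(e). -/
/-!
Border `f` with `|B| - m` dummy rows and `|A| - m` dummy columns that absorb the deficits of the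
real rows and columns, spread uniformly, and put zeros in the dummy–dummy block. The bordered matrix
is square and doubly stochastic, so by Birkhoff–von Neumann it is a convex combination of
bijections from rows to columns. A bijection in the support uses only positive entries: it never
pairs two dummies, so the `|A| - m` dummy columns are hit by real rows and exactly `m` real rows go
to real columns, along edges of `E`. These `m` pairs form a matching, and pushing the Birkhoff
weights forward to matchings gives `μ`, whose edge marginals are the entries of the real block,
namely `f`.
-/

open Finset Matrix

section Birkhoff
variable {I J : Type*} [Fintype I] [Fintype J] [DecidableEq I] [DecidableEq J]

theorem Matrix.exists_eq_sum_equiv_of_row_col_sum_eq_one (M : Matrix I J ℝ)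
    (hcard : Fintype.card I = Fintype.card J) (h0 : ∀ i j, 0 ≤ M i j)
    (hrow : ∀ i, ∑ j, M i j = 1) (hcol : ∀ j, ∑ i, M i j = 1) :
    ∃ w : (I ≃ J) → ℝ, (∀ σ, 0 ≤ w σ) ∧ ∑ σ, w σ = 1 ∧
      ∀ i j, M i j = ∑ σ, if σ i = j then w σ else 0 := by
  obtain ⟨ε⟩ : Nonempty (I ≃ J) := Fintype.card_eq.mp hcard
  have hM : M.submatrix id ε ∈ doublyStochastic ℝ I :=
    mem_doublyStochastic_iff_sum.mpr
      ⟨fun i j => h0 _ _, fun i => (ε.sum_comp (M i)).trans (hrow i), fun j => hcol (ε j)⟩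
  obtain ⟨w, hw0, hw1, hw⟩ := exists_eq_sum_perm_of_mem_doublyStochastic hM
  let e : (I ≃ J) ≃ Equiv.Perm I := Equiv.equivCongr (Equiv.refl I) ε.symm
  refine ⟨fun σ => w (e σ), fun σ => hw0 _, (e.sum_comp w).trans hw1, fun i j => ?_⟩
  have hij := congrFun (congrFun hw i) (ε.symm j)
  simp only [submatrix_apply, id, Equiv.apply_symm_apply, sum_apply, smul_apply] at hij
  rw [← hij, ← e.sum_comp]
  refine sum_congr rfl fun σ _ => ?_
  simp [e, PEquiv.toMatrix_apply, eq_comm]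

theorem Matrix.pos_apply_of_eq_sum_equiv {M : Matrix I J ℝ} {w : (I ≃ J) → ℝ}
    (hw0 : ∀ σ, 0 ≤ w σ) (hM : ∀ i j, M i j = ∑ σ, if σ i = j then w σ else 0) {σ : I ≃ J}
    (hσ : w σ ≠ 0) (i : I) : 0 < M i (σ i) := by
  rw [hM]
  refine ((hw0 σ).lt_of_ne' hσ).trans_le ?_
  simpa using single_le_sum (f := fun τ : I ≃ J => if τ i = σ i then w τ else 0)
    (fun τ _ => ite_nonneg (hw0 τ) le_rfl) (mem_univ σ)

end Birkhoff

section InlGraph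
variable {α β γ δ : Type*} [DecidableEq β] [DecidableEq δ]

def Equiv.inlGraph [Fintype α] [Fintype β] (σ : α ⊕ γ ≃ β ⊕ δ) : Finset (α × β) :=
  {p | σ (.inl p.1) = .inl p.2}

variable [Fintype α] [Fintype β] (σ : α ⊕ γ ≃ β ⊕ δ)

@[simp]
theorem Equiv.mem_inlGraph {p : α × β} : p ∈ σ.inlGraph ↔ σ (.inl p.1) = .inl p.2 := by
  simp [inlGraph]

theorem Equiv.inlGraph_pairwise :
    ∀ e ∈ σ.inlGraph, ∀ e' ∈ σ.inlGraph, e ≠ e' → e.1 ≠ e'.1 ∧ e.2 ≠ e'.2 := by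
  intro e he e' he' hne
  rw [mem_inlGraph] at he he'
  refine ⟨fun h => hne (Prod.ext h ?_), fun h => hne (Prod.ext ?_ h)⟩
  · exact Sum.inl_injective (he.symm.trans (h ▸ he'))
  · exact Sum.inl_injective (σ.injective (he.trans (h ▸ he'.symm)))

theorem Equiv.card_inlGraph_add_card [Fintype γ] [Fintype δ] (h : ∀ c, (σ (.inr c)).isLeft) :
    #σ.inlGraph + Fintype.card δ = Fintype.card α := by
  have hδ : ∀ d, ∑ a, (if σ (.inl a) = .inr d then 1 else 0) = 1 := by
    intro d
    have hγ : ∀ c, σ (.inr c) ≠ .inr d := fun c hc => by simpa [hc] using h c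
    have hall := σ.sum_comp (fun j => if j = .inr d then 1 else 0)
    simpa only [Fintype.sum_sum_type, hγ, if_false, sum_const_zero, add_zero,
      Fintype.sum_ite_eq'] using hall
  calc #σ.inlGraph + Fintype.card δ
      = ∑ a, ∑ b, (if σ (.inl a) = .inl b then 1 else 0) +
          ∑ d, ∑ a, (if σ (.inl a) = .inr d then 1 else 0) := by
        simp only [inlGraph, card_filter, Fintype.sum_prod_type, hδ, sum_const, card_univ,
          smul_eq_mul, mul_one]
    _ = ∑ a, ∑ j, (if σ (.inl a) = j then 1 else 0) := by
        rw [sum_comm (s := univ (α := δ)), ← sum_add_distrib]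
        simp only [Fintype.sum_sum_type]
    _ = Fintype.card α := by simp

end InlGraph

theorem exists_distribution_of_map {α X : Type*} [Fintype α] [Fintype X] [DecidableEq X]
    {w : α → ℝ} (hw0 : ∀ a, 0 ≤ w a) (hw1 : ∑ a, w a = 1) (g : α → Finset X)
    {P : Finset X → Prop} (hP : ∀ a, w a ≠ 0 → P (g a)) :
    ∃ μ : Finset X → ℝ, (∀ N, 0 ≤ μ N) ∧ (∀ N, μ N ≠ 0 → P N) ∧ ∑ N, μ N = 1 ∧
      ∀ x, ∑ N, (if x ∈ N then μ N else 0) = ∑ a, if x ∈ g a then w a else 0 := by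
  refine ⟨fun N => ∑ a with g a = N, w a, fun N => sum_nonneg fun a _ => hw0 a,
    fun N hN => ?_, (sum_fiberwise univ g w).trans hw1, fun x => ?_⟩
  · obtain ⟨a, ha, hwa⟩ := exists_ne_zero_of_sum_ne_zero hN
    exact (mem_filter.mp ha).2 ▸ hP a hwa
  · rw [← sum_fiberwise univ g]
    refine sum_congr rfl fun N _ => ?_
    rw [ite_sum_zero]
    exact sum_congr rfl fun a ha => by rw [(mem_filter.mp ha).2]

section SlackBorder
variable {A B : Type*} [Fintype A] [Fintype B]

structure Matrix.IsFractionalMatching (F : Matrix A B ℝ) (m : ℕ) : Prop where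
  nonneg : ∀ a b, 0 ≤ F a b
  sum_row_le_one : ∀ a, ∑ b, F a b ≤ 1
  sum_col_le_one : ∀ b, ∑ a, F a b ≤ 1
  sum_eq : ∑ a, ∑ b, F a b = m

-- A division by `|A| - m = 0` is harmless: there are then no dummy columns.
noncomputable def Matrix.slackBorder (F : Matrix A B ℝ) (m : ℕ) :
    Matrix (A ⊕ Fin (Fintype.card B - m)) (B ⊕ Fin (Fintype.card A - m)) ℝ :=
  fromBlocks F (of fun a _ => (1 - ∑ b, F a b) / (Fintype.card A - m : ℕ))
    (of fun _ b => (1 - ∑ a, F a b) / (Fintype.card B - m : ℕ)) 0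

theorem Matrix.slackBorder_transpose (F : Matrix A B ℝ) (m : ℕ) :
    (F.slackBorder m)ᵀ = Fᵀ.slackBorder m := by
  rw [slackBorder, fromBlocks_transpose]
  rfl

namespace Matrix.IsFractionalMatching
variable {F : Matrix A B ℝ} {m : ℕ}

theorem transpose (hF : F.IsFractionalMatching m) : Fᵀ.IsFractionalMatching m :=
  ⟨fun b a => hF.nonneg a b, hF.sum_col_le_one, hF.sum_row_le_one, sum_comm.trans hF.sum_eq⟩

theorem le_card_left (hF : F.IsFractionalMatching m) : m ≤ Fintype.card A := by
  have : (m : ℝ) ≤ Fintype.card A := by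
    rw [← hF.sum_eq]
    simpa using sum_le_sum fun a (_ : a ∈ univ) => hF.sum_row_le_one a
  exact_mod_cast this

theorem sum_one_sub_sum_row (hF : F.IsFractionalMatching m) :
    ∑ a, (1 - ∑ b, F a b) = ((Fintype.card A - m : ℕ) : ℝ) := by
  rw [sum_sub_distrib, hF.sum_eq, Nat.cast_sub hF.le_card_left]
  simp

theorem sum_slackBorder_row (hF : F.IsFractionalMatching m) (i) :
    ∑ j, F.slackBorder m i j = 1 := by
  rcases i with a | x
  · have hslack : ((Fintype.card A - m : ℕ) : ℝ) = 0 → 1 - ∑ b, F a b = 0 := fun h0 =>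
      (sum_eq_zero_iff_of_nonneg fun a _ => sub_nonneg.mpr (hF.sum_row_le_one a)).mp
        (hF.sum_one_sub_sum_row.trans h0) a (mem_univ a)
    simp only [slackBorder, Fintype.sum_sum_type, fromBlocks_apply₁₁, fromBlocks_apply₁₂, of_apply,
      sum_const, card_univ, Fintype.card_fin, nsmul_eq_mul, mul_div_cancel_of_imp' hslack]
    ring
  · have hpos : 0 < ((Fintype.card B - m : ℕ) : ℝ) := Nat.cast_pos.mpr x.pos
    simp only [slackBorder, Fintype.sum_sum_type, fromBlocks_apply₂₁, fromBlocks_apply₂₂, of_apply,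
      zero_apply, sum_const_zero, add_zero, ← sum_div]
    exact (div_eq_one_iff_eq hpos.ne').mpr hF.transpose.sum_one_sub_sum_row

theorem sum_slackBorder_col (hF : F.IsFractionalMatching m) (j) :
    ∑ i, F.slackBorder m i j = 1 := by
  simpa [← slackBorder_transpose] using hF.transpose.sum_slackBorder_row j

theorem slackBorder_nonneg (hF : F.IsFractionalMatching m) (i j) :
    0 ≤ F.slackBorder m i j := by
  rcases i with a | x <;> rcases j with b | y <;>
    simp only [slackBorder, fromBlocks_apply₁₁, fromBlocks_apply₁₂, fromBlocks_apply₂₁,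
      fromBlocks_apply₂₂, of_apply, zero_apply, le_refl]
  · exact hF.nonneg a b
  · exact div_nonneg (sub_nonneg.mpr (hF.sum_row_le_one a)) (Nat.cast_nonneg _)
  · exact div_nonneg (sub_nonneg.mpr (hF.sum_col_le_one b)) (Nat.cast_nonneg _)

theorem card_sum_eq (hF : F.IsFractionalMatching m) :
    Fintype.card (A ⊕ Fin (Fintype.card B - m)) =
      Fintype.card (B ⊕ Fin (Fintype.card A - m)) := by
  have := hF.le_card_left
  have := hF.transpose.le_card_left
  simp only [Fintype.card_sum, Fintype.card_fin]
  omega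

theorem isSizeMMatching_inlGraph [DecidableEq A] [DecidableEq B]
    (hF : F.IsFractionalMatching m) {E : Finset (A × B)} (hE : ∀ a b, 0 < F a b → (a, b) ∈ E)
    (σ : A ⊕ Fin (Fintype.card B - m) ≃ B ⊕ Fin (Fintype.card A - m))
    (hσ : ∀ i, 0 < F.slackBorder m i (σ i)) : IsSizeMMatching E m σ.inlGraph := by
  refine ⟨fun p hp => ?_, ?_, σ.inlGraph_pairwise⟩
  · have hpos := hσ (.inl p.1)
    rw [σ.mem_inlGraph.mp hp] at hpos
    exact hE p.1 p.2 hpos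
  · have hdummy : ∀ x, (σ (.inr x)).isLeft := by
      intro x
      have hpos := hσ (.inr x)
      rcases hx : σ (.inr x) with b | y
      · rfl
      · simp [hx, slackBorder] at hpos
    have hcard := σ.card_inlGraph_add_card hdummy
    have := hF.le_card_left
    simp only [Fintype.card_fin] at hcard
    omega

end Matrix.IsFractionalMatching
end SlackBorder

theorem stmt_6_general {A B : Type*} [Fintype A] [Fintype B] [DecidableEq A] [DecidableEq B]
    (E : Finset (A × B)) (m : ℕ) (f : A × B → ℝ)
    (hf0 : ∀ e, 0 ≤ f e) (hsupp : ∀ e ∉ E, f e = 0)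
    (hA : ∀ v : A, ∑ u : B, f (v, u) ≤ 1)
    (hB : ∀ u : B, ∑ v : A, f (v, u) ≤ 1)
    (hm : ∑ e ∈ E, f e = m) :
    ∃ μ : Finset (A × B) → ℝ,
      (∀ M, 0 ≤ μ M) ∧
      (∀ M, μ M ≠ 0 → IsSizeMMatching E m M) ∧
      (∑ M : Finset (A × B), μ M = 1) ∧
      (∀ e : A × B, ∑ M : Finset (A × B), (if e ∈ M then μ M else 0) = f e) := by
  set F : Matrix A B ℝ := of fun a b => f (a, b)
  have hF : F.IsFractionalMatching m := by
    refine ⟨fun a b => hf0 (a, b), hA, hB, ?_⟩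
    show ∑ a, ∑ b, f (a, b) = m
    rw [← Fintype.sum_prod_type', ← hm]
    exact (sum_subset (subset_univ E) fun e _ he => hsupp e he).symm
  have hE : ∀ a b, 0 < F a b → (a, b) ∈ E := fun a b hpos =>
    by_contra fun he => hpos.ne' (hsupp _ he)
  obtain ⟨w, hw0, hw1, hw⟩ := (F.slackBorder m).exists_eq_sum_equiv_of_row_col_sum_eq_one
    hF.card_sum_eq hF.slackBorder_nonneg hF.sum_slackBorder_row hF.sum_slackBorder_col
  obtain ⟨μ, hμ0, hμE, hμ1, hμe⟩ := exists_distribution_of_map hw0 hw1 Equiv.inlGraph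
    fun σ hσ => hF.isSizeMMatching_inlGraph hE σ (pos_apply_of_eq_sum_equiv hw0 hw hσ)
  refine ⟨μ, hμ0, hμE, hμ1, fun e => ?_⟩
  rw [hμe]
  simp only [Equiv.mem_inlGraph]
  exact (hw (.inl e.1) (.inl e.2)).symm

/-- If `f : E → [0,1]` is a fractional matching of total weight `m ∈ ℕ`, then there is a
probability distribution `μ` on the matchings of size `m` such that a `μ`-random matching
contains any fixed edge `e` with probability exactly `f(e)`. -/
theorem stmt_6 {A B : Type*} [Fintype A] [Fintype B] [DecidableEq A] [DecidableEq B]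
    (E : Finset (A × B)) (m : ℕ) (f : A × B → ℝ)
    (hf0 : ∀ e, 0 ≤ f e) (hf1 : ∀ e, f e ≤ 1) (hsupp : ∀ e ∉ E, f e = 0)
    (hA : ∀ v : A, ∑ u : B, f (v, u) ≤ 1)
    (hB : ∀ u : B, ∑ v : A, f (v, u) ≤ 1)
    (hm : ∑ e ∈ E, f e = m) :
    ∃ μ : Finset (A × B) → ℝ,
      (∀ M, 0 ≤ μ M) ∧
      (∀ M, μ M ≠ 0 → IsSizeMMatching E m M) ∧
      (∑ M : Finset (A × B), μ M = 1) ∧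
      (∀ e : A × B, ∑ M : Finset (A × B), (if e ∈ M then μ M else 0) = f e) :=
  stmt_6_general E m f hf0 hsupp hA hB hm
end

section
/- With the weights w_{vu} = u_t(n−u_t) on the comparability graph between V_i and V_{i+1} in [n]^D, if (v,u) is an edge of color l (i.e., u_t = v_t + 1 = l), then deg(v) = deg(u) + D(n−1) − 2(i+1) + 2l − n + 1, where deg denotes weighted degree. -/
open Classical

/-- The rank of `x ∈ {0,...,n-1}^D`: the sum of its coordinates. -/
def rank {n D : ℕ} (x : Fin D → Fin n) : ℕ := ∑ t, (x t : ℕ)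

/-- The weight of an edge `(v,u)` of the comparability graph between consecutive levels:
if `u` covers `v` by incrementing the (unique) coordinate `t`, the weight is
`u_t (n - u_t)`. -/
def edgeWeight {n D : ℕ} (v u : Fin D → Fin n) : ℕ :=
  ∑ t, if (u t : ℕ) = (v t : ℕ) + 1 ∧ (∀ s, s ≠ t → u s = v s)
       then (u t : ℕ) * (n - (u t : ℕ)) else 0

/-- Weighted degree of `v ∈ V_i` towards `V_{i+1}`. -/
noncomputable def degUp {n D : ℕ} (v : Fin D → Fin n) : ℕ :=
  ∑ u ∈ Finset.univ.filter (fun u : Fin D → Fin n => v < u ∧ rank u = rank v + 1),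
    edgeWeight v u

/-- Weighted degree of `u ∈ V_{i+1}` towards `V_i`. -/
noncomputable def degDown {n D : ℕ} (u : Fin D → Fin n) : ℕ :=
  ∑ v ∈ Finset.univ.filter (fun v : Fin D → Fin n => v < u ∧ rank u = rank v + 1),
    edgeWeight v u

/-! Both weighted degrees are sums over the coordinates of `f(x) = x(n - x)`: the upper neighbours
of `v` are the `v + e_s` (for `v_s + 1 < n`), of weight `f(v_s + 1)`, and the lower neighbours of
`u` are the `u - e_s` (for `u_s > 0`), of weight `f(u_s)`; truncated subtraction makes both
formulas hold without the side conditions. Since `u = v + e_t`,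
`deg(v) - deg(u) = ∑_s (f(v_s + 1) - f(v_s)) - (f(v_t + 1) - f(v_t))`,
and `f(x + 1) - f(x) = n - 1 - 2x` sums to `D(n - 1) - 2i`. -/

open Finset Function

section

variable {n D : ℕ} {v u : Fin D → Fin n} {t : Fin D}

def IsIncrementAt (v u : Fin D → Fin n) (t : Fin D) : Prop :=
  (u t : ℕ) = v t + 1 ∧ ∀ s, s ≠ t → u s = v s

lemma edgeWeight_eq_sum_ite :
    edgeWeight v u = ∑ t, if IsIncrementAt v u t then (u t : ℕ) * (n - u t) else 0 := by
  unfold edgeWeight IsIncrementAt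
  congr! 2

lemma IsIncrementAt.lt (h : IsIncrementAt v u t) : v < u := by
  obtain ⟨ht, hrest⟩ := h
  refine Pi.lt_def.2 ⟨fun s => ?_, t, Fin.lt_def.2 (by omega)⟩
  by_cases hs : s = t
  · subst hs; exact Fin.le_def.2 (by omega)
  · exact (hrest s hs).ge

lemma IsIncrementAt.rank_eq (h : IsIncrementAt v u t) : rank u = rank v + 1 := by
  have hrest : ∑ s ∈ univ.erase t, (u s : ℕ) = ∑ s ∈ univ.erase t, (v s : ℕ) :=
    sum_congr rfl fun s hs => by rw [h.2 s (ne_of_mem_erase hs)]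
  unfold rank
  rw [← add_sum_erase _ _ (mem_univ t), ← add_sum_erase _ _ (mem_univ t), hrest, h.1]
  ring

lemma isIncrementAt_of_le_of_rank_eq_succ (hle : v ≤ u) (hrank : rank u = rank v + 1)
    (ht : (u t : ℕ) = v t + 1) : IsIncrementAt v u t := by
  refine ⟨ht, fun s hs => ?_⟩
  have hrest : ∑ r ∈ univ.erase t, (v r : ℕ) = ∑ r ∈ univ.erase t, (u r : ℕ) := by
    unfold rank at hrank
    rw [← add_sum_erase _ _ (mem_univ t), ← add_sum_erase _ _ (mem_univ t), ht] at hrank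
    omega
  exact Fin.ext ((sum_eq_sum_iff_of_le fun r _ => Fin.le_def.1 (hle r)).1 hrest s
    (mem_erase.2 ⟨hs, mem_univ s⟩)).symm

lemma isIncrementAt_iff_eq_update_left {x : Fin n} (hx : (x : ℕ) = v t + 1) :
    IsIncrementAt v u t ↔ u = update v t x := by
  rw [eq_update_iff, IsIncrementAt, ← hx, Fin.val_inj]

lemma isIncrementAt_iff_eq_update_right {y : Fin n} (hy : (y : ℕ) + 1 = u t) :
    IsIncrementAt v u t ↔ v = update u t y := by
  rw [eq_update_iff, IsIncrementAt, ← hy, add_left_inj, Fin.val_inj]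
  exact and_congr eq_comm (forall₂_congr fun _ _ => eq_comm)

lemma edgeWeight_eq_zero_of_not_adj (h : ¬(v < u ∧ rank u = rank v + 1)) :
    edgeWeight v u = 0 := by
  rw [edgeWeight_eq_sum_ite]
  exact sum_eq_zero fun t _ => if_neg fun hinc => h ⟨hinc.lt, hinc.rank_eq⟩

lemma degUp_eq_sum_edgeWeight : degUp v = ∑ u, edgeWeight v u :=
  sum_filter_of_ne fun _ _ hw => not_not.1 (mt edgeWeight_eq_zero_of_not_adj hw)

lemma degDown_eq_sum_edgeWeight : degDown u = ∑ v, edgeWeight v u :=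
  sum_filter_of_ne fun _ _ hw => not_not.1 (mt edgeWeight_eq_zero_of_not_adj hw)

lemma degUp_eq_sum : degUp v = ∑ t, ((v t : ℕ) + 1) * (n - (v t + 1)) := by
  rw [degUp_eq_sum_edgeWeight]
  simp_rw [edgeWeight_eq_sum_ite]
  rw [sum_comm]
  refine sum_congr rfl fun t _ => ?_
  by_cases hlt : (v t : ℕ) + 1 < n
  · simp_rw [isIncrementAt_iff_eq_update_left (x := ⟨_, hlt⟩) rfl, sum_ite_eq', mem_univ,
      if_true, update_self]
  · rw [Nat.sub_eq_zero_of_le (not_lt.1 hlt), mul_zero]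
    exact sum_eq_zero fun u _ =>
      if_neg fun (hinc : IsIncrementAt v u t) => hlt (hinc.1 ▸ (u t).isLt)

lemma degDown_eq_sum : degDown u = ∑ t, (u t : ℕ) * (n - u t) := by
  rw [degDown_eq_sum_edgeWeight]
  simp_rw [edgeWeight_eq_sum_ite]
  rw [sum_comm]
  refine sum_congr rfl fun t _ => ?_
  by_cases hpos : 0 < (u t : ℕ)
  · have hy : (u t : ℕ) - 1 < n := by omega
    simp_rw [isIncrementAt_iff_eq_update_right (y := ⟨_, hy⟩) (u := u) (t := t) (by simp; omega),
      sum_ite_eq', mem_univ, if_true]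
  · simp [Nat.eq_zero_of_not_pos hpos]

lemma degUp_sub_degDown (h : IsIncrementAt v u t) :
    (degUp v : ℤ) - degDown u = D * (n - 1) - 2 * rank v - (n - 2 * (v t : ℕ) - 1) := by
  set f : ℤ → ℤ := fun x => x * (n - x)
  have hup : (degUp v : ℤ) = ∑ r, f ((v r : ℕ) + 1) := by
    rw [degUp_eq_sum]
    push_cast [Nat.cast_sub (Nat.succ_le_of_lt (v _).isLt)]
    rfl
  have hdown : (degDown u : ℤ) = ∑ r, f (u r : ℕ) := by
    rw [degDown_eq_sum]
    push_cast [Nat.cast_sub (u _).isLt.le]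
    rfl
  have hstep : ∑ r, (f ((v r : ℕ) + 1) - f (v r : ℕ)) = D * (n - 1) - 2 * rank v := by
    simp only [f, rank]
    push_cast
    simp only [show ∀ x : ℤ, (x + 1) * (n - (x + 1)) - x * (n - x) = (n - 1) - 2 * x by
      intro x; ring, sum_sub_distrib, ← mul_sum]
    simp only [sum_const, card_univ, Fintype.card_fin, nsmul_eq_mul]
    ring
  have hjump : ∑ r, (f (u r : ℕ) - f (v r : ℕ)) = f ((v t : ℕ) + 1) - f (v t : ℕ) := by
    rw [sum_eq_single t (fun r _ hr => by rw [h.2 r hr, sub_self]) (by simp), h.1, Nat.cast_succ]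
  rw [sum_sub_distrib] at hstep hjump
  rw [hup, hdown]
  simp only [f] at hjump
  linarith

end

/-- If `(v,u)` is an edge of color `l` (i.e. `u_t = v_t + 1 = l` in the unique changed
coordinate `t`), with `v ∈ V_i` and `u ∈ V_{i+1}`, then
`deg(v) = deg(u) + D(n-1) - 2(i+1) + 2l - n + 1`. -/
theorem stmt_10 (n D i l : ℕ) (v u : Fin D → Fin n) (t : Fin D)
    (hv : rank v = i) (hu : rank u = i + 1) (hvu : v < u)
    (ht : (u t : ℕ) = l ∧ (v t : ℕ) + 1 = l) :
    (degUp v : ℤ) = (degDown u : ℤ) + D * (n - 1) - 2 * (i + 1) + 2 * l - n + 1 := by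
  have hinc : IsIncrementAt v u t :=
    isIncrementAt_of_le_of_rank_eq_succ hvu.le (by omega) (by omega)
  have key := degUp_sub_degDown hinc
  rw [hv, show ((v t : ℕ) : ℤ) = l - 1 by omega] at key
  linarith
end

section
/- For u ∈ V_{i+1} ⊆ {0,...,n-1}^D with i + 1 ≥ (n-1)(D-1)/2, the weighted degree of u in the comparability graph to V_i satisfies deg(u) = Σ_{j=0}^{n-1} b_j(u)·j(n−j) ≥ (D−1)(n−1)/2. -/
open Classical

/-- The weighted degree of `u` towards the level below equals `∑ t, u_t (n - u_t)`:
for each nonzero coordinate `t` of `u` there is a unique `v` covered by `u`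
obtained by decrementing that coordinate, and the corresponding edge weight is
`u_t (n - u_t)`. -/
theorem degDown_eq {n D : ℕ} (u : Fin D → Fin n) :
    degDown u = ∑ t, (u t : ℕ) * (n - (u t : ℕ)) := by
  unfold degDown edgeWeight
  rw [Finset.sum_filter]
  have step : ∀ v : Fin D → Fin n,
      (if v < u ∧ rank u = rank v + 1 then
        ∑ t, if (u t : ℕ) = (v t : ℕ) + 1 ∧ (∀ s, s ≠ t → u s = v s)
          then (u t : ℕ) * (n - (u t : ℕ)) else 0
      else 0)
      = ∑ t, if (u t : ℕ) = (v t : ℕ) + 1 ∧ (∀ s, s ≠ t → u s = v s)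
          then (u t : ℕ) * (n - (u t : ℕ)) else 0 := by
    intro v
    split_ifs with h
    · rfl
    · symm
      apply Finset.sum_eq_zero
      intro t _
      rw [if_neg]
      rintro ⟨h1, h2⟩
      apply h
      constructor
      · rw [Pi.lt_def]
        refine ⟨fun s => ?_, t, ?_⟩
        · by_cases hs : s = t
          · subst hs; exact Fin.le_def.mpr (by omega)
          · exact le_of_eq (h2 s hs).symm
        · exact Fin.lt_def.mpr (by omega)
      · unfold rank
        have hval : ∀ s, (u s : ℕ) = (v s : ℕ) + (if s = t then 1 else 0) := by
          intro s
          by_cases hs : s = t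
          · subst hs; simp [h1]
          · simp [hs, h2 s hs]
        calc ∑ s, (u s:ℕ) = ∑ s, ((v s:ℕ) + if s = t then 1 else 0) :=
              Finset.sum_congr rfl (fun s _ => hval s)
          _ = (∑ s, (v s:ℕ)) + ∑ s, (if s = t then 1 else 0) := Finset.sum_add_distrib
          _ = (∑ s, (v s:ℕ)) + 1 := by
              rw [Finset.sum_ite_eq' Finset.univ t (fun _ => 1)]; simp
  rw [Finset.sum_congr rfl (fun v _ => step v), Finset.sum_comm]
  apply Finset.sum_congr rfl
  intro t _
  by_cases ht : (u t : ℕ) = 0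
  · rw [Finset.sum_eq_zero, ht, Nat.zero_mul]
    intro v _
    rw [if_neg]
    rintro ⟨h1, _⟩
    omega
  · set v0 : Fin D → Fin n :=
      Function.update u t ⟨(u t : ℕ) - 1, lt_of_le_of_lt (Nat.sub_le _ _) (u t).2⟩ with hv0
    have hch : ∀ v : Fin D → Fin n,
        ((u t : ℕ) = (v t : ℕ) + 1 ∧ (∀ s, s ≠ t → u s = v s)) ↔ v = v0 := by
      intro v
      constructor
      · rintro ⟨h1, h2⟩
        funext s
        by_cases hs : s = t
        · subst hs
          simp only [hv0, Function.update_self]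
          exact Fin.ext (by simp; omega)
        · simp only [hv0, Function.update_of_ne hs]
          exact (h2 s hs).symm
      · rintro rfl
        refine ⟨?_, fun s hs => ?_⟩
        · simp only [hv0, Function.update_self]; omega
        · simp only [hv0, Function.update_of_ne hs]
    calc (∑ v : Fin D → Fin n, if (u t : ℕ) = (v t : ℕ) + 1 ∧ (∀ s, s ≠ t → u s = v s)
            then (u t : ℕ) * (n - (u t : ℕ)) else 0)
        = ∑ v : Fin D → Fin n, if v = v0 then (u t : ℕ) * (n - (u t : ℕ)) else 0 :=
          Finset.sum_congr rfl (fun v _ => if_congr (hch v) rfl rfl)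
      _ = (u t : ℕ) * (n - (u t : ℕ)) := by
          rw [Finset.sum_ite_eq' Finset.univ v0 (fun _ => (u t : ℕ) * (n - (u t : ℕ)))]
          simp

/-- For `u ∈ V_{i+1} ⊆ {0,...,n-1}^D` with `i + 1 ≥ (n-1)(D-1)/2`, the weighted degree
of `u` towards `V_i` equals `Σ_j b_j(u)·j(n-j)` and is at least `(D-1)(n-1)/2`. -/
theorem stmt_11 (n D i : ℕ) (u : Fin D → Fin n)
    (hu : rank u = i + 1) (hi : (n - 1) * (D - 1) ≤ 2 * (i + 1)) :
    degDown u = (∑ j ∈ Finset.range n,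
        (Finset.univ.filter (fun t : Fin D => (u t : ℕ) = j)).card * (j * (n - j))) ∧
    (D - 1) * (n - 1) ≤ 2 * degDown u := by
  have hdeg := degDown_eq u
  constructor
  · rw [hdeg, ← Finset.sum_fiberwise_of_maps_to (g := fun t => (u t : ℕ))
      (t := Finset.range n) (fun t _ => Finset.mem_range.mpr (u t).2)]
    refine Finset.sum_congr rfl (fun j _ => ?_)
    rw [Finset.sum_congr rfl (fun t ht => ?_), Finset.sum_const, smul_eq_mul]
    have := (Finset.mem_filter.mp ht).2
    rw [this]
  · have hn2 : 2 ≤ n := by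
      rcases Nat.lt_or_ge n 2 with h | h
      · exfalso
        have hz : rank u = 0 :=
          Finset.sum_eq_zero (fun t _ => by have := (u t).2; omega)
        omega
      · exact h
    set S := Finset.univ.filter (fun t : Fin D => (u t : ℕ) ≠ 0) with hS
    have h1 : rank u ≤ S.card * (n - 1) := by
      unfold rank
      rw [← Finset.sum_filter_ne_zero]
      calc ∑ t ∈ Finset.univ.filter (fun t => (u t : ℕ) ≠ 0), (u t : ℕ)
          ≤ ∑ _t ∈ S, (n - 1) :=
            Finset.sum_le_sum (fun t _ => by have := (u t).2; omega)
        _ = S.card * (n - 1) := by rw [Finset.sum_const, smul_eq_mul]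
    have h2 : S.card * (n - 1) ≤ degDown u := by
      rw [hdeg]
      calc S.card * (n - 1) = ∑ _t ∈ S, (n - 1) := by rw [Finset.sum_const, smul_eq_mul]
        _ ≤ ∑ t ∈ S, (u t : ℕ) * (n - (u t : ℕ)) := by
            apply Finset.sum_le_sum
            intro t ht
            have hnz : (u t : ℕ) ≠ 0 := (Finset.mem_filter.mp ht).2
            have hlt : (u t : ℕ) < n := (u t).2
            obtain ⟨a, ha⟩ : ∃ a, (u t : ℕ) = a + 1 := ⟨(u t : ℕ) - 1, by omega⟩
            obtain ⟨b, hb⟩ : ∃ b, n - (u t : ℕ) = b + 1 := ⟨n - (u t : ℕ) - 1, by omega⟩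
            have hn1 : n - 1 = a + b + 1 := by omega
            rw [hn1, hb, ha]
            nlinarith
        _ ≤ ∑ t, (u t : ℕ) * (n - (u t : ℕ)) :=
            Finset.sum_le_sum_of_subset (Finset.filter_subset _ _)
    have hc : D - 1 ≤ 2 * S.card := by
      have hmul : (n - 1) * (D - 1) ≤ (n - 1) * (2 * S.card) := by
        calc (n - 1) * (D - 1) ≤ 2 * (i + 1) := hi
          _ = 2 * rank u := by rw [hu]
          _ ≤ 2 * (S.card * (n - 1)) := by omega
          _ = (n - 1) * (2 * S.card) := by ring
      exact Nat.le_of_mul_le_mul_left hmul (by omega)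
    calc (D - 1) * (n - 1) ≤ 2 * S.card * (n - 1) := Nat.mul_le_mul_right _ hc
      _ = 2 * (S.card * (n - 1)) := by ring
      _ ≤ 2 * degDown u := by omega
end

section
/- Let P be a finite poset with |P| = m_0, and let d_1 > ... > d_k and m_0 > m_1 > ... > m_k be positive integers such that for each 1 ≤ j ≤ k, every subset S of P with |S| > m_j contains at least |S|·d_j comparable pairs. Then there is a family F of subsets of P with: (1) |F| ≤ Π_{r=1}^k C(m_{r−1}, ≤ m_{r−1}/(2d_r+1)); (2) every A ∈ F has |A| ≤ m_k + Σ_{r=1}^k (m_r − 1)/(2d_r+1); (3) every antichain I of P is contained in some A ∈ F. -/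
open Classical

/-- The number of comparable pairs in a finite subset `S` of a poset: unordered pairs
`{x,y} ⊆ S` with `x < y`, counted as ordered pairs `(x,y)` with `x < y`. -/
noncomputable def comparablePairs {P : Type*} [Fintype P] [PartialOrder P]
    (S : Finset P) : ℕ :=
  ((S ×ˢ S).filter (fun p : P × P => p.1 < p.2)).card

namespace Ctr
open Finset
variable {P : Type*} [Fintype P] [PartialOrder P]

set_option linter.unusedSectionVars false

noncomputable def nbhd (C : Finset P) (v : P) : Finset P :=
  C.filter (fun u => u < v ∨ v < u)

lemma nbhd_subset (C : Finset P) (v : P) : nbhd C v ⊆ C := filter_subset _ _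

lemma mem_nbhd {C : Finset P} {u v : P} : u ∈ nbhd C v ↔ u ∈ C ∧ (u < v ∨ v < u) :=
  mem_filter

lemma nbhd_mono {C C' : Finset P} (h : C ⊆ C') (v : P) : nbhd C v ⊆ nbhd C' v :=
  filter_subset_filter _ h

lemma not_mem_nbhd_self (C : Finset P) (v : P) : v ∉ nbhd C v := by
  simp [mem_nbhd]

lemma nbhd_sdiff_self (C : Finset P) (v : P) : nbhd (C \ nbhd C v) v = ∅ := by
  ext u
  simp only [mem_nbhd, Finset.mem_sdiff, Finset.notMem_empty, iff_false]
  rintro ⟨⟨hu, hn⟩, hc⟩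
  exact hn ⟨hu, hc⟩

lemma handshake (S : Finset P) :
    ∑ v ∈ S, (nbhd S v).card = 2 * comparablePairs S := by
  have key : ∀ u v : P, (if (u < v ∨ v < u) then (1:ℕ) else 0)
      = (if u < v then (1:ℕ) else 0) + (if v < u then (1:ℕ) else 0) := by
    intro u v
    by_cases h1 : u < v
    · simp [h1, asymm h1]
    · simp [h1]
  simp only [nbhd, card_filter, comparablePairs]
  rw [Finset.sum_product]
  have : ∀ v ∈ S, ∑ u ∈ S, (if (u < v ∨ v < u) then (1:ℕ) else 0)
      = (∑ u ∈ S, if u < v then (1:ℕ) else 0) + ∑ u ∈ S, if v < u then (1:ℕ) else 0 := by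
    intro v _
    rw [← Finset.sum_add_distrib]
    exact Finset.sum_congr rfl fun u _ => key u v
  rw [Finset.sum_congr rfl this, Finset.sum_add_distrib, Finset.sum_comm, two_mul]

lemma exists_big_nbhd (m' d : ℕ) (hd1 : 1 ≤ d)
    (hs : ∀ S : Finset P, m' < S.card → S.card * d ≤ comparablePairs S)
    (C : Finset P) (hC : m' < C.card) :
    ∃ v ∈ C, (nbhd C v).Nonempty ∧ 2 * d ≤ (nbhd C v).card := by
  by_contra hcon
  push_neg at hcon
  have hb : ∀ v ∈ C, (nbhd C v).card ≤ 2 * d - 1 := by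
    intro v hv
    rcases Finset.eq_empty_or_nonempty (nbhd C v) with h | h
    · simp [h]
    · have := hcon v hv h; omega
  have hsum : ∑ v ∈ C, (nbhd C v).card ≤ C.card * (2 * d - 1) := by
    calc ∑ v ∈ C, (nbhd C v).card ≤ ∑ _v ∈ C, (2 * d - 1) := Finset.sum_le_sum hb
      _ = C.card * (2 * d - 1) := by rw [Finset.sum_const, smul_eq_mul]
  have h2 : 2 * (C.card * d) ≤ ∑ v ∈ C, (nbhd C v).card := by
    rw [handshake]; exact Nat.mul_le_mul_left 2 (hs C hC)
  have hpos : 0 < C.card := lt_of_le_of_lt (Nat.zero_le _) hC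
  have h3 : C.card * (2 * d) ≤ C.card * (2 * d - 1) := by
    calc C.card * (2 * d) = 2 * (C.card * d) := by ring
      _ ≤ ∑ v ∈ C, (nbhd C v).card := h2
      _ ≤ C.card * (2 * d - 1) := hsum
  have h4 := Nat.le_of_mul_le_mul_left h3 hpos
  omega


noncomputable def ctrs (m' d : ℕ) (C : Finset P) : Finset (Finset P × Finset P) :=
  if C.card ≤ m' then {(∅, C)}
  else if h : ∃ v ∈ C, (nbhd C v).Nonempty ∧ 2 * d ≤ (nbhd C v).card then
    ctrs m' d (C.erase h.choose) ∪
      (ctrs m' d (C \ nbhd C h.choose)).image (fun p => (insert h.choose p.1, p.2))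
  else ∅
termination_by C.card
decreasing_by
  · exact Finset.card_erase_lt_of_mem h.choose_spec.1
  · exact Finset.card_lt_card (Finset.sdiff_ssubset (Finset.filter_subset _ _) h.choose_spec.2.1)


lemma ctrs_spec (m' d : ℕ) (hd1 : 1 ≤ d)
    (hs : ∀ S : Finset P, m' < S.card → S.card * d ≤ comparablePairs S)
    (C : Finset P) :
    (∀ p ∈ ctrs m' d C, p.2.card ≤ m' ∧ p.1 ⊆ C ∧ p.1 ⊆ p.2 ∧
        (∀ u ∈ p.1, (nbhd C u).Nonempty) ∧ p.1.card * (2 * d) + p.2.card ≤ C.card) ∧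
    (∀ u ∈ C, nbhd C u = ∅ → ∀ p ∈ ctrs m' d C, u ∈ p.2) ∧
    (∀ p ∈ ctrs m' d C, ∀ q ∈ ctrs m' d C, p.1 = q.1 → p = q) ∧
    (∀ I : Finset P, I ⊆ C → (∀ a ∈ I, ∀ b ∈ I, a ≠ b → ¬(a < b ∨ b < a)) →
        ∃ p ∈ ctrs m' d C, I ⊆ p.2) := by
  induction C using Finset.strongInduction with
  | _ C ih =>
  by_cases h1 : C.card ≤ m'
  · rw [ctrs, if_pos h1]
    refine ⟨?_, ?_, ?_, ?_⟩
    · intro p hp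
      rw [Finset.mem_singleton] at hp
      subst hp
      exact ⟨h1, by simp, by simp, by simp, by simp⟩
    · intro u hu _ p hp
      rw [Finset.mem_singleton] at hp; subst hp; exact hu
    · intro p hp q hq _
      rw [Finset.mem_singleton] at hp hq; rw [hp, hq]
    · intro I hI _
      exact ⟨(∅, C), Finset.mem_singleton_self _, hI⟩
  · have h2 : ∃ v ∈ C, (nbhd C v).Nonempty ∧ 2 * d ≤ (nbhd C v).card :=
      exists_big_nbhd m' d hd1 hs C (lt_of_not_ge h1)
    rw [ctrs, if_neg h1, dif_pos h2]
    set v := h2.choose with hv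
    obtain ⟨hvC, hvne, hvdeg⟩ := h2.choose_spec
    have hsub1 : C.erase v ⊂ C := Finset.erase_ssubset hvC
    have hsub2 : C \ nbhd C v ⊂ C :=
      Finset.sdiff_ssubset (nbhd_subset C v) hvne
    obtain ⟨ih1a, ih1b, ih1c, ih1d⟩ := ih _ hsub1
    obtain ⟨ih2a, ih2b, ih2c, ih2d⟩ := ih _ hsub2
    -- v is isolated in C \ nbhd C v, hence in every second component there
    have hviso : ∀ q ∈ ctrs m' d (C \ nbhd C v), v ∈ q.2 := by
      intro q hq
      exact ih2b v (Finset.mem_sdiff.2 ⟨hvC, not_mem_nbhd_self C v⟩)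
        (nbhd_sdiff_self C v) q hq
    -- v is in no first component of the right branch recursion
    have hvnotT : ∀ q ∈ ctrs m' d (C \ nbhd C v), v ∉ q.1 := by
      intro q hq hvq
      have := (ih2a q hq).2.2.2.1 v hvq
      rw [nbhd_sdiff_self C v] at this
      exact Finset.not_nonempty_empty this
    refine ⟨?_, ?_, ?_, ?_⟩
    · -- conjunct 1
      intro p hp
      rcases Finset.mem_union.1 hp with hp | hp
      · obtain ⟨ha, hb, hc, hd', he⟩ := ih1a p hp
        refine ⟨ha, hb.trans (Finset.erase_subset _ _), hc, ?_, ?_⟩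
        · intro u hu
          exact (hd' u hu).mono (nbhd_mono (Finset.erase_subset _ _) u)
        · calc p.1.card * (2 * d) + p.2.card ≤ (C.erase v).card := he
            _ ≤ C.card := Finset.card_le_card (Finset.erase_subset _ _)
      · obtain ⟨q, hq, rfl⟩ := Finset.mem_image.1 hp
        obtain ⟨ha, hb, hc, hd', he⟩ := ih2a q hq
        have hvq : v ∉ q.1 := hvnotT q hq
        refine ⟨ha, ?_, ?_, ?_, ?_⟩
        · intro u hu
          rcases Finset.mem_insert.1 hu with rfl | hu
          · exact hvC
          · exact (Finset.sdiff_subset) (hb hu)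
        · intro u hu
          rcases Finset.mem_insert.1 hu with rfl | hu
          · exact hviso q hq
          · exact hc hu
        · intro u hu
          rcases Finset.mem_insert.1 hu with rfl | hu
          · exact hvne
          · exact (hd' u hu).mono (nbhd_mono (Finset.sdiff_subset) u)
        · have hins : (insert v q.1).card = q.1.card + 1 :=
            Finset.card_insert_of_notMem hvq
          have hsd : (C \ nbhd C v).card = C.card - (nbhd C v).card :=
            Finset.card_sdiff_of_subset (nbhd_subset C v)
          have hle : (nbhd C v).card ≤ C.card := Finset.card_le_card (nbhd_subset C v)
          simp only [hins]
          have : q.1.card * (2 * d) + q.2.card ≤ C.card - (nbhd C v).card := by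
            rw [← hsd]; exact he
          have h2d : 2 * d ≤ (nbhd C v).card := hvdeg
          rw [add_mul, one_mul]
          omega
    · -- conjunct 2 : isolated vertices survive
      intro u huC hu0 p hp
      have huv : u ≠ v := by
        rintro rfl
        rw [hu0] at hvne
        exact Finset.not_nonempty_empty hvne
      rcases Finset.mem_union.1 hp with hp | hp
      · refine ih1b u (Finset.mem_erase.2 ⟨huv, huC⟩) ?_ p hp
        exact Finset.subset_empty.1
          ((nbhd_mono (Finset.erase_subset _ _) u).trans (by rw [hu0]))
      · obtain ⟨q, hq, rfl⟩ := Finset.mem_image.1 hp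
        have hun : u ∉ nbhd C v := by
          intro hmem
          have hc := (mem_nbhd.1 hmem).2
          have : v ∈ nbhd C u := mem_nbhd.2 ⟨hvC, by tauto⟩
          rw [hu0] at this
          exact Finset.notMem_empty _ this
        exact ih2b u (Finset.mem_sdiff.2 ⟨huC, hun⟩)
          (Finset.subset_empty.1
            ((nbhd_mono (Finset.sdiff_subset) u).trans (by rw [hu0]))) q hq
    · -- conjunct 3 : fingerprint determines container
      intro p hp q hq heq
      rcases Finset.mem_union.1 hp with hp | hp <;>
        rcases Finset.mem_union.1 hq with hq | hq
      · exact ih1c p hp q hq heq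
      · exfalso
        obtain ⟨q0, hq0, rfl⟩ := Finset.mem_image.1 hq
        have : v ∉ p.1 := fun hvp =>
          (Finset.mem_erase.1 ((ih1a p hp).2.1 hvp)).1 rfl
        rw [heq] at this
        exact this (Finset.mem_insert_self _ _)
      · exfalso
        obtain ⟨p0, hp0, rfl⟩ := Finset.mem_image.1 hp
        have : v ∉ q.1 := fun hvq =>
          (Finset.mem_erase.1 ((ih1a q hq).2.1 hvq)).1 rfl
        rw [← heq] at this
        exact this (Finset.mem_insert_self _ _)
      · obtain ⟨p0, hp0, rfl⟩ := Finset.mem_image.1 hp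
        obtain ⟨q0, hq0, rfl⟩ := Finset.mem_image.1 hq
        simp only [Prod.mk.injEq] at heq ⊢
        have hTp : v ∉ p0.1 := hvnotT p0 hp0
        have hTq : v ∉ q0.1 := hvnotT q0 hq0
        have hT : p0.1 = q0.1 := by
          have := heq
          rw [← Finset.erase_insert hTp, ← Finset.erase_insert hTq, this]
        have := ih2c p0 hp0 q0 hq0 hT
        rw [this]
        exact ⟨rfl, rfl⟩
    · -- conjunct 4 : coverage
      intro I hI hind
      by_cases hvI : v ∈ I
      · have hIsub : I ⊆ C \ nbhd C v := by
          intro u hu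
          refine Finset.mem_sdiff.2 ⟨hI hu, ?_⟩
          by_cases huv : u = v
          · rw [huv]; exact not_mem_nbhd_self C v
          · intro hmem
            exact hind u hu v hvI huv (mem_nbhd.1 hmem).2
        obtain ⟨q, hq, hIq⟩ := ih2d I hIsub hind
        exact ⟨(insert v q.1, q.2), Finset.mem_union_right _
          (Finset.mem_image.2 ⟨q, hq, rfl⟩), hIq⟩
      · have hIsub : I ⊆ C.erase v := by
          intro u hu
          refine Finset.mem_erase.2 ⟨?_, hI hu⟩
          rintro rfl
          exact hvI hu
        obtain ⟨q, hq, hIq⟩ := ih1d I hIsub hind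
        exact ⟨q, Finset.mem_union_left _ hq, hIq⟩


lemma card_le_sum_choose (S : Finset (Finset P × Finset P)) (C : Finset P) (t : ℕ)
    (hmap : ∀ p ∈ S, p.1 ⊆ C ∧ p.1.card ≤ t)
    (hinj : ∀ p ∈ S, ∀ q ∈ S, p.1 = q.1 → p = q) :
    S.card ≤ ∑ s ∈ Finset.range (t + 1), (C.card).choose s := by
  have h1 : S.card ≤ (C.powerset.filter (fun T => T.card ≤ t)).card := by
    apply Finset.card_le_card_of_injOn (fun p => p.1)
    · intro p hp
      exact Finset.mem_filter.2 ⟨Finset.mem_powerset.2 (hmap p hp).1, (hmap p hp).2⟩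
    · intro p hp q hq h
      exact hinj p hp q hq h
  refine h1.trans ?_
  have h2 : C.powerset.filter (fun T => T.card ≤ t) ⊆
      (Finset.range (t + 1)).biUnion (fun s => C.powersetCard s) := by
    intro T hT
    obtain ⟨hT1, hT2⟩ := Finset.mem_filter.1 hT
    exact Finset.mem_biUnion.2 ⟨T.card, Finset.mem_range.2 (by omega),
      Finset.mem_powersetCard.2 ⟨Finset.mem_powerset.1 hT1, rfl⟩⟩
  refine (Finset.card_le_card h2).trans ?_
  refine (Finset.card_biUnion_le).trans ?_
  apply Finset.sum_le_sum
  intro s _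
  rw [Finset.card_powersetCard]

lemma sum_choose_mono {n M q : ℕ} (h : n ≤ M) :
    ∑ s ∈ Finset.range (n / q + 1), n.choose s ≤
    ∑ s ∈ Finset.range (M / q + 1), M.choose s := by
  calc ∑ s ∈ Finset.range (n / q + 1), n.choose s
      ≤ ∑ s ∈ Finset.range (n / q + 1), M.choose s :=
        Finset.sum_le_sum fun i _ => Nat.choose_le_choose i h
    _ ≤ ∑ s ∈ Finset.range (M / q + 1), M.choose s := by
        apply Finset.sum_le_sum_of_subset
        apply Finset.range_subset_range.2
        have := Nat.div_le_div_right (c := q) h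
        omega


lemma ctrs_card_le (m' d : ℕ) (hd1 : 1 ≤ d)
    (hs : ∀ S : Finset P, m' < S.card → S.card * d ≤ comparablePairs S)
    (C : Finset P) :
    (ctrs m' d C).card ≤
      ∑ s ∈ Finset.range (C.card / (2 * d + 1) + 1), (C.card).choose s := by
  obtain ⟨h1, _, h3, _⟩ := ctrs_spec m' d hd1 hs C
  apply card_le_sum_choose _ C _ _ h3
  intro p hp
  obtain ⟨_, hb, hc, _, he⟩ := h1 p hp
  refine ⟨hb, ?_⟩
  rw [Nat.le_div_iff_mul_le (by omega)]
  have := Finset.card_le_card hc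
  calc p.1.card * (2 * d + 1) = p.1.card * (2 * d) + p.1.card := by ring
    _ ≤ p.1.card * (2 * d) + p.2.card := by omega
    _ ≤ C.card := he


end Ctr

/-- The container lemma (Lemma 5.4 of Noel–Scott–Sudakov).  Let `P` be a finite poset
with `|P| = m 0`, and let `d 0 > ... > d (k-1)` and `m 0 > m 1 > ... > m k` be positive
integers such that every `S ⊆ P` with `|S| > m (j+1)` contains at least `|S|·d j`
comparable pairs.  Then there is a family `F` of subsets of `P` such that
(1) `|F| ≤ Π_r C(m r, ≤ m r/(2·d r + 1))`,
(2) every `A ∈ F` has `|A| ≤ m k + Σ_r (m (r+1) - 1)/(2·d r + 1)`, and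
(3) every antichain of `P` is contained in some `A ∈ F`. -/
theorem stmt_16 {P : Type*} [Fintype P] [PartialOrder P] (k : ℕ) (hk : 1 ≤ k)
    (d : Fin k → ℕ) (m : Fin (k + 1) → ℕ)
    (hd : StrictAnti d) (hm : StrictAnti m)
    (hdpos : ∀ j, 0 < d j) (hmpos : ∀ j, 0 < m j)
    (hm0 : m 0 = Fintype.card P)
    (hsat : ∀ j : Fin k, ∀ S : Finset P, m j.succ < S.card →
      S.card * d j ≤ comparablePairs S) :
    ∃ F : Finset (Finset P),
      (F.card ≤ ∏ r : Fin k, ∑ s ∈ Finset.range (m r.castSucc / (2 * d r + 1) + 1),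
          Nat.choose (m r.castSucc) s) ∧
      (∀ A ∈ F, (A.card : ℝ) ≤
          m (Fin.last k) + ∑ r : Fin k, ((m r.succ : ℝ) - 1) / (2 * d r + 1)) ∧
      (∀ I : Finset P, IsAntichain (· ≤ ·) (I : Set P) → ∃ A ∈ F, I ⊆ A) := by
  classical
  set M : ℕ → ℕ := fun i => m ⟨min i k, by omega⟩ with hM
  set D : ℕ → ℕ := fun i => d ⟨min i (k - 1), by omega⟩ with hD
  have hMeq : ∀ i (h : i ≤ k), M i = m ⟨i, by omega⟩ := by
    intro i h; simp only [hM]; congr 1; exact Fin.ext (by simp [Nat.min_eq_left h])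
  have hDeq : ∀ i (h : i < k), D i = d ⟨i, h⟩ := by
    intro i h; simp only [hD]; congr 1; exact Fin.ext (by simp; omega)
  have key : ∀ j, j ≤ k → ∃ F : Finset (Finset P),
      (F.card ≤ ∏ r ∈ Finset.range j,
        ∑ s ∈ Finset.range (M r / (2 * D r + 1) + 1), (M r).choose s) ∧
      (∀ A ∈ F, A.card ≤ M j) ∧
      (∀ I : Finset P, IsAntichain (· ≤ ·) (I : Set P) → ∃ A ∈ F, I ⊆ A) := by
    intro j
    induction j with
    | zero =>
      intro _
      refine ⟨{Finset.univ}, ?_, ?_, ?_⟩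
      · simp
      · intro A hA
        rw [Finset.mem_singleton] at hA
        subst hA
        rw [Finset.card_univ, hMeq 0 (by omega)]
        have : (⟨0, by omega⟩ : Fin (k+1)) = 0 := rfl
        rw [this, hm0]
      · intro I _
        exact ⟨Finset.univ, Finset.mem_singleton_self _, Finset.subset_univ I⟩
    | succ j ihj =>
      intro hjk
      obtain ⟨F, hF1, hF2, hF3⟩ := ihj (by omega)
      have hjlt : j < k := by omega
      have hd1 : 1 ≤ D j := by rw [hDeq j hjlt]; exact hdpos _
      have hs : ∀ S : Finset P, M (j+1) < S.card → S.card * D j ≤ comparablePairs S := by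
        intro S hS
        rw [hDeq j hjlt]
        apply hsat ⟨j, hjlt⟩
        have : (⟨j, hjlt⟩ : Fin k).succ = ⟨j + 1, by omega⟩ := rfl
        rw [this, ← hMeq (j+1) hjk]
        exact hS
      refine ⟨F.biUnion (fun A => (Ctr.ctrs (M (j+1)) (D j) A).image Prod.snd), ?_, ?_, ?_⟩
      · refine (Finset.card_biUnion_le).trans ?_
        have hbd : ∀ A ∈ F, ((Ctr.ctrs (M (j+1)) (D j) A).image Prod.snd).card ≤
            ∑ s ∈ Finset.range (M j / (2 * D j + 1) + 1), (M j).choose s := by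
          intro A hA
          refine (Finset.card_image_le).trans ?_
          refine (Ctr.ctrs_card_le _ _ hd1 hs A).trans ?_
          exact Ctr.sum_choose_mono (hF2 A hA)
        calc ∑ A ∈ F, ((Ctr.ctrs (M (j+1)) (D j) A).image Prod.snd).card
            ≤ ∑ _A ∈ F, ∑ s ∈ Finset.range (M j / (2 * D j + 1) + 1), (M j).choose s :=
              Finset.sum_le_sum hbd
          _ = F.card * ∑ s ∈ Finset.range (M j / (2 * D j + 1) + 1), (M j).choose s := by
              rw [Finset.sum_const, smul_eq_mul]
          _ ≤ (∏ r ∈ Finset.range j,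
                ∑ s ∈ Finset.range (M r / (2 * D r + 1) + 1), (M r).choose s) *
                ∑ s ∈ Finset.range (M j / (2 * D j + 1) + 1), (M j).choose s :=
              Nat.mul_le_mul_right _ hF1
          _ = ∏ r ∈ Finset.range (j+1),
                ∑ s ∈ Finset.range (M r / (2 * D r + 1) + 1), (M r).choose s := by
              rw [Finset.prod_range_succ]
      · intro A' hA'
        obtain ⟨A, hA, hA'2⟩ := Finset.mem_biUnion.1 hA'
        obtain ⟨p, hp, rfl⟩ := Finset.mem_image.1 hA'2
        exact ((Ctr.ctrs_spec _ _ hd1 hs A).1 p hp).1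
      · intro I hI
        obtain ⟨A, hA, hIA⟩ := hF3 I hI
        have hind : ∀ a ∈ I, ∀ b ∈ I, a ≠ b → ¬(a < b ∨ b < a) := by
          intro a ha b hb hab hcon
          rcases hcon with h | h
          · exact hI (Finset.mem_coe.2 ha) (Finset.mem_coe.2 hb) hab h.le
          · exact hI (Finset.mem_coe.2 hb) (Finset.mem_coe.2 ha) (Ne.symm hab) h.le
        obtain ⟨p, hp, hIp⟩ := (Ctr.ctrs_spec _ _ hd1 hs A).2.2.2 I hIA hind
        exact ⟨p.2, Finset.mem_biUnion.2 ⟨A, hA, Finset.mem_image.2 ⟨p, hp, rfl⟩⟩, hIp⟩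
  obtain ⟨F, hF1, hF2, hF3⟩ := key k le_rfl
  refine ⟨F, ?_, ?_, hF3⟩
  · refine hF1.trans ?_
    rw [← Fin.prod_univ_eq_prod_range
      (fun i => ∑ s ∈ Finset.range (M i / (2 * D i + 1) + 1), (M i).choose s) k]
    apply le_of_eq
    apply Finset.prod_congr rfl
    intro r _
    have e1 : M r.val = m r.castSucc := by
      rw [hMeq _ (le_of_lt r.isLt)]
      congr 1
    have e2 : D r.val = d r := by
      rw [hDeq _ r.isLt]
    rw [e1, e2]
  · intro A hA
    have h1 : A.card ≤ m (Fin.last k) := by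
      have := hF2 A hA
      rwa [hMeq k le_rfl] at this
    have h2 : (0:ℝ) ≤ ∑ r : Fin k, ((m r.succ : ℝ) - 1) / (2 * d r + 1) := by
      apply Finset.sum_nonneg
      intro r _
      apply div_nonneg
      · rw [sub_nonneg]
        exact_mod_cast Nat.one_le_cast.2 (hmpos r.succ)
      · positivity
    have h3 : (A.card : ℝ) ≤ (m (Fin.last k) : ℝ) := Nat.cast_le.2 h1
    linarith
end
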